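/- arXiv:1207.4051 — 6 statements merged into one kernel-verified Lean document; each statement's English description precedes it below -/
import Mathlib

section
/- Let B be a linear map on ℝⁿ commuting with the antisymmetric matrix A and satisfying B v = 0. If C : ℝ → ℝⁿ is an arclength-parametrized solution of the soliton equation C'' = (α + A)C + v + λ(s) C', then δ(s) = ½‖B C(s)‖² satisfies the ODE δ'' - λ(s) δ' - 2α δ = ‖B C'(s)‖². -/
open Matrix
open scoped RealInnerProductSpace

/-!
Differentiating `δ = ½‖B C‖²` twice gives `δ'' = ⟪B C, B C''⟫ + ‖B C'‖²`. Since `B` commutes with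
`A` and kills `v`, we have `B C'' = (α + A) (B C) + λ B C'`, and `⟪B C, A (B C)⟫ = 0` by the
antisymmetry of `A`; what remains is `α ‖B C‖² + λ δ'`.
-/

theorem LinearMap.inner_apply_self_eq_zero_of_adjoint_eq_neg {E : Type*} [NormedAddCommGroup E]
    [InnerProductSpace ℝ E] [FiniteDimensional ℝ E] {T : E →ₗ[ℝ] E} (hT : T.adjoint = -T)
    (x : E) : ⟪x, T x⟫ = 0 := by
  have h : ⟪T.adjoint x, x⟫ = ⟪x, T x⟫ := LinearMap.adjoint_inner_left T x x
  rw [hT, LinearMap.neg_apply, inner_neg_left, real_inner_comm] at h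
  linarith

theorem Matrix.toEuclideanLin_adjoint_eq_neg_of_transpose_eq_neg {ι : Type*} [Fintype ι]
    [DecidableEq ι] {A : Matrix ι ι ℝ} (hA : Aᵀ = -A) :
    A.toEuclideanLin.adjoint = -A.toEuclideanLin := by
  rw [← Matrix.toEuclideanLin_conjTranspose_eq_adjoint, conjTranspose_eq_transpose_of_trivial, hA,
    map_neg]

theorem inner_map_map_smul_add_add_of_comm {E : Type*} [NormedAddCommGroup E]
    [InnerProductSpace ℝ E] {B T : E →ₗ[ℝ] E} (hBT : B ∘ₗ T = T ∘ₗ B) (hT : ∀ y, ⟪y, T y⟫ = 0)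
    {v : E} (hBv : B v = 0)
    (α : ℝ) (x : E) : ⟪B x, B (α • x + T x + v)⟫ = α * ‖B x‖ ^ 2 := by
  rw [map_add, map_add, hBv, add_zero, map_smul, ← LinearMap.comp_apply, hBT,
    LinearMap.comp_apply, inner_add_right, hT, add_zero, real_inner_smul_right,
    real_inner_self_eq_norm_sq]

theorem LinearMap.hasDerivAt_comp {E F : Type*} [NormedAddCommGroup E] [NormedSpace ℝ E]
    [FiniteDimensional ℝ E] [NormedAddCommGroup F] [NormedSpace ℝ F] (L : E →ₗ[ℝ] F)
    {f : ℝ → E} {f' : E} {t : ℝ} (hf : HasDerivAt f f' t) :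
    HasDerivAt (fun s => L (f s)) (L f') t :=
  (LinearMap.toContinuousLinearMap L).hasFDerivAt.comp_hasDerivAt t hf

section HalfNormSq

variable {F : Type*} [NormedAddCommGroup F] [InnerProductSpace ℝ F] {f : ℝ → F}

theorem deriv_half_norm_sq (hf : Differentiable ℝ f) :
    deriv (fun t => 1 / 2 * ‖f t‖ ^ 2) = fun t => ⟪f t, deriv f t⟫ := by
  funext t
  refine (((hf t).hasDerivAt.norm_sq).const_mul (1 / 2)).deriv.trans ?_
  ring

theorem deriv_deriv_half_norm_sq (hf : Differentiable ℝ f) {s : ℝ}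
    (hf' : DifferentiableAt ℝ (deriv f) s) :
    deriv (deriv (fun t => 1 / 2 * ‖f t‖ ^ 2)) s = ⟪f s, deriv (deriv f) s⟫ + ‖deriv f s‖ ^ 2 := by
  rw [deriv_half_norm_sq hf, ((hf s).hasDerivAt.inner ℝ hf'.hasDerivAt).deriv,
    real_inner_self_eq_norm_sq]

end HalfNormSq

theorem stmt5_general (n : ℕ) (α : ℝ) (A : Matrix (Fin n) (Fin n) ℝ) (hA : Aᵀ = -A)
    (v : EuclideanSpace ℝ (Fin n))
    (B : EuclideanSpace ℝ (Fin n) →ₗ[ℝ] EuclideanSpace ℝ (Fin n))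
    (hBA : B ∘ₗ A.toEuclideanLin = A.toEuclideanLin ∘ₗ B)
    (hBv : B v = 0)
    (C : ℝ → EuclideanSpace ℝ (Fin n)) (lam : ℝ → ℝ)
    (hC : ContDiff ℝ 2 C)
    (heq : ∀ s, deriv (deriv C) s
      = α • C s + A.toEuclideanLin (C s) + v + lam s • deriv C s) :
    ∀ s, deriv (deriv (fun s' => (1 / 2) * ‖B (C s')‖ ^ 2)) s
        - lam s * deriv (fun s' => (1 / 2) * ‖B (C s')‖ ^ 2) s
        - 2 * α * ((1 / 2) * ‖B (C s)‖ ^ 2)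
      = ‖B (deriv C s)‖ ^ 2 := by
  intro s
  have hC₁ : Differentiable ℝ C := hC.differentiable (by norm_num)
  have hC₂ : Differentiable ℝ (deriv C) := hC.differentiable_deriv_two
  have hBC : deriv (fun t => B (C t)) = fun t => B (deriv C t) :=
    funext fun t => (B.hasDerivAt_comp (hC₁ t).hasDerivAt).deriv
  have hBC₁ : Differentiable ℝ (fun t => B (C t)) := fun t =>
    (B.hasDerivAt_comp (hC₁ t).hasDerivAt).differentiableAt
  have hBC₂ : HasDerivAt (deriv fun t => B (C t)) (B (deriv (deriv C) s)) s := by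
    rw [hBC]; exact B.hasDerivAt_comp (hC₂ s).hasDerivAt
  have hskew := LinearMap.inner_apply_self_eq_zero_of_adjoint_eq_neg
    (Matrix.toEuclideanLin_adjoint_eq_neg_of_transpose_eq_neg hA)
  rw [deriv_deriv_half_norm_sq hBC₁ hBC₂.differentiableAt, hBC₂.deriv, deriv_half_norm_sq hBC₁,
    hBC, heq, map_add, map_smul, inner_add_right, inner_map_map_smul_add_add_of_comm hBA hskew hBv,
    real_inner_smul_right]
  ring

theorem stmt5 (n : ℕ) (α : ℝ) (A : Matrix (Fin n) (Fin n) ℝ) (hA : Aᵀ = -A)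
    (v : EuclideanSpace ℝ (Fin n))
    (B : EuclideanSpace ℝ (Fin n) →ₗ[ℝ] EuclideanSpace ℝ (Fin n))
    (hBA : B ∘ₗ A.toEuclideanLin = A.toEuclideanLin ∘ₗ B)
    (hBv : B v = 0)
    (C : ℝ → EuclideanSpace ℝ (Fin n)) (lam : ℝ → ℝ)
    (hC : ContDiff ℝ 2 C)
    (harc : ∀ s, ‖deriv C s‖ = 1)
    (hlam : ∀ s, lam s = -⟪α • C s + A.toEuclideanLin (C s) + v, deriv C s⟫)
    (heq : ∀ s, deriv (deriv C) s
      = α • C s + A.toEuclideanLin (C s) + v + lam s • deriv C s) :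
    ∀ s, deriv (deriv (fun s' => (1 / 2) * ‖B (C s')‖ ^ 2)) s
        - lam s * deriv (fun s' => (1 / 2) * ‖B (C s')‖ ^ 2) s
        - 2 * α * ((1 / 2) * ‖B (C s)‖ ^ 2)
      = ‖B (deriv C s)‖ ^ 2 :=
  stmt5_general n α A hA v B hBA hBv C lam hC heq
end

section
/- Let α < 0 and let C : ℝ → ℝⁿ be an arclength-parametrized rotating-shrinking soliton (C'' = (α+A)C + λ C', A antisymmetric). If at some s₀ we have ‖C(s₀)‖² = -1/α and (d/ds)‖C(s)‖²|_{s=s₀} = 0, then ‖C(s)‖² = -1/α for all s ∈ ℝ; i.e. the soliton lies entirely on the sphere of radius (-α)^{-1/2}. -/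
/-!
Write `u = ‖C‖² + 1/α`. Since `‖C'‖ = 1` and `⟪C, A C⟫ = 0` for antisymmetric `A`, the soliton
equation gives `(⟪C, C'⟫)' = 1 + α ‖C‖² + λ ⟪C, C'⟫`, so `u'' = 2α u + λ u'`: a linear second
order equation with continuous coefficients. The hypotheses say `u(s₀) = u'(s₀) = 0`, and
uniqueness for linear ODEs forces `u ≡ 0`.
-/

open Matrix Set ContinuousLinearMap
open scoped RealInnerProductSpace

theorem eq_zero_of_hasDerivAt_clm_apply {E : Type*} [NormedAddCommGroup E] [NormedSpace ℝ E]
    {L : ℝ → E →L[ℝ] E} (hL : Continuous L) {x : ℝ → E}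
    (hx : ∀ t, HasDerivAt x (L t (x t)) t) {t₀ : ℝ} (h₀ : x t₀ = 0) (t : ℝ) : x t = 0 := by
  set R := |t₀| + |t| + 1
  obtain ⟨M, hM⟩ := isCompact_Icc.exists_bound_of_continuousOn (hL.continuousOn (s := Icc (-R) R))
  have hlip : ∀ s ∈ Ioo (-R) R, LipschitzOnWith M.toNNReal (L s) univ := by
    refine fun s hs => ((L s).lipschitz.weaken ?_).lipschitzOnWith
    rw [← NNReal.coe_le_coe, coe_nnnorm, Real.coe_toNNReal']
    exact (hM s (Ioo_subset_Icc_self hs)).trans (le_max_left _ _)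
  have hmem : ∀ s, |s| < R → s ∈ Ioo (-R) R := fun s hs => abs_lt.mp hs
  have hzero : ∀ s, HasDerivAt (0 : ℝ → E) (L s ((0 : ℝ → E) s)) s := fun s => by simp
  exact ODE_solution_unique_of_mem_Ioo hlip (hmem t₀ (by linarith [abs_nonneg t]))
    (fun s _ => ⟨hx s, trivial⟩) (fun s _ => ⟨hzero s, trivial⟩) h₀
    (hmem t (by linarith [abs_nonneg t₀]))

theorem eq_zero_of_hasDerivAt_second_order_linear {p q u v : ℝ → ℝ} (hp : Continuous p)
    (hq : Continuous q) (hu : ∀ t, HasDerivAt u (v t) t)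
    (hv : ∀ t, HasDerivAt v (p t * u t + q t * v t) t) {t₀ : ℝ} (hu₀ : u t₀ = 0)
    (hv₀ : v t₀ = 0) (t : ℝ) : u t = 0 := by
  let L (s : ℝ) : ℝ × ℝ →L[ℝ] ℝ × ℝ :=
    inl ℝ ℝ ℝ ∘L snd ℝ ℝ ℝ + p s • (inr ℝ ℝ ℝ ∘L fst ℝ ℝ ℝ) + q s • (inr ℝ ℝ ℝ ∘L snd ℝ ℝ ℝ)
  have hL : Continuous L := by fun_prop
  have hx : ∀ s, HasDerivAt (fun s => (u s, v s)) (L s (u s, v s)) s := fun s => by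
    simpa [L] using (hu s).prodMk (hv s)
  exact congrArg Prod.fst (eq_zero_of_hasDerivAt_clm_apply hL hx (Prod.ext hu₀ hv₀) t)

theorem Matrix.inner_toEuclideanLin_self_of_transpose_eq_neg {ι : Type*} [Fintype ι]
    [DecidableEq ι] {A : Matrix ι ι ℝ} (hA : Aᵀ = -A) (x : EuclideanSpace ℝ ι) :
    ⟪x, A.toEuclideanLin x⟫ = 0 := by
  have hneg : ⟪x, A.toEuclideanLin x⟫ = -⟪x, A.toEuclideanLin x⟫ := calc
    ⟪x, A.toEuclideanLin x⟫ = ⟪Aᵀ.toEuclideanLin x, x⟫ := by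
      rw [← conjTranspose_eq_transpose_of_trivial, toEuclideanLin_conjTranspose_eq_adjoint,
        LinearMap.adjoint_inner_left]
    _ = -⟪x, A.toEuclideanLin x⟫ := by
      rw [hA, map_neg, LinearMap.neg_apply, inner_neg_left, real_inner_comm]
  linarith

theorem hasDerivAt_inner_deriv_of_soliton {ι : Type*} [Fintype ι] [DecidableEq ι] {α lam : ℝ}
    {A : Matrix ι ι ℝ} (hA : Aᵀ = -A) {C : ℝ → EuclideanSpace ℝ ι} {s : ℝ}
    (hC : DifferentiableAt ℝ C s) (hC' : DifferentiableAt ℝ (deriv C) s)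
    (harc : ‖deriv C s‖ = 1)
    (heq : deriv (deriv C) s = α • C s + A.toEuclideanLin (C s) + lam • deriv C s) :
    HasDerivAt (fun t => ⟪C t, deriv C t⟫) (α * ‖C s‖ ^ 2 + lam * ⟪C s, deriv C s⟫ + 1) s := by
  refine (hC.hasDerivAt.inner ℝ hC'.hasDerivAt).congr_deriv ?_
  rw [heq, inner_add_right, inner_add_right, real_inner_smul_right, real_inner_smul_right,
    inner_toEuclideanLin_self_of_transpose_eq_neg hA, real_inner_self_eq_norm_sq,
    real_inner_self_eq_norm_sq, harc]
  ring

theorem stmt7 (n : ℕ) (α : ℝ) (hα : α < 0)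
    (A : Matrix (Fin n) (Fin n) ℝ) (hA : Aᵀ = -A)
    (C : ℝ → EuclideanSpace ℝ (Fin n)) (lam : ℝ → ℝ)
    (hC : ContDiff ℝ 2 C)
    (harc : ∀ s, ‖deriv C s‖ = 1)
    (hlam : ∀ s, lam s = -⟪α • C s + A.toEuclideanLin (C s), deriv C s⟫)
    (heq : ∀ s, deriv (deriv C) s
      = α • C s + A.toEuclideanLin (C s) + lam s • deriv C s)
    (s₀ : ℝ) (h1 : ‖C s₀‖ ^ 2 = -1 / α)
    (h2 : deriv (fun s => ‖C s‖ ^ 2) s₀ = 0) :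
    ∀ s, ‖C s‖ ^ 2 = -1 / α := by
  have hCd : Differentiable ℝ C := hC.differentiable (by norm_num)
  have hC'd : Differentiable ℝ (deriv C) :=
    (contDiff_succ_iff_deriv.mp hC).2.2.differentiable one_ne_zero
  have hlamc : Continuous lam := by
    rw [funext hlam]
    exact ((hCd.continuous.const_smul α).add
      ((LinearMap.continuous_of_finiteDimensional _).comp hCd.continuous)).inner
      hC'd.continuous |>.neg
  have hu (s : ℝ) : HasDerivAt (fun s => ‖C s‖ ^ 2 + 1 / α) (2 * ⟪C s, deriv C s⟫) s :=
    (hCd s).hasDerivAt.norm_sq.add_const _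
  have hv (s : ℝ) : HasDerivAt (fun s => 2 * ⟪C s, deriv C s⟫)
      (2 * α * (‖C s‖ ^ 2 + 1 / α) + lam s * (2 * ⟪C s, deriv C s⟫)) s := by
    refine ((hasDerivAt_inner_deriv_of_soliton hA (hCd s) (hC'd s) (harc s) (heq s)).const_mul
      2).congr_deriv ?_
    field_simp [hα.ne]
    ring
  have hv₀ : 2 * ⟪C s₀, deriv C s₀⟫ = 0 := h2 ▸ (hCd s₀).hasDerivAt.norm_sq.deriv.symm
  intro s
  have hs := eq_zero_of_hasDerivAt_second_order_linear continuous_const hlamc hu hv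
    (by rw [h1]; ring) hv₀ s
  rw [neg_div]
  linarith
end

section
/- Let C : ℝ → ℝⁿ be an arclength-parametrized translating-rotating soliton: C'' = A C + v + λ C' with A v = 0. Then Z = Π_{N(A)}∘C satisfies Z'' = v + λ(s) Z', and Z(s) = Z(0) + Φ₁(s) Z'(0) + Φ_p(s) v where Φ₁ solves Φ₁'' = λ Φ₁', Φ₁(0)=0, Φ₁'(0)=1, and Φ_p solves Φ_p'' = λ Φ_p' + 1, Φ_p(0)=Φ_p'(0)=0. In particular Z(s) lies in the affine plane through Z(0) spanned by Z'(0) and v. -/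
/-!
Because `A` is skew-adjoint, its range is orthogonal to its kernel, so projecting the soliton
equation onto `ker A` kills `A C` and fixes `v`: `Z'' = v + λ Z'`. Then
`Z' - (Φ₁' Z'(0) + Φ_p' v)` solves `y' = λ y` with `y(0) = 0`, so it vanishes (the integrating
factor `exp (-∫ λ)` makes it constant), and integrating once more gives the formula for `Z`.
-/

open Matrix
open scoped RealInnerProductSpace

section SkewAdjoint

variable {𝕜 E : Type*} [RCLike 𝕜] [NormedAddCommGroup E] [InnerProductSpace 𝕜 E]
  [FiniteDimensional 𝕜 E]

theorem LinearMap.starProjection_ker_apply_self_of_adjoint_eq_neg {T : E →ₗ[𝕜] E}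
    (hT : T.adjoint = -T) (x : E) : (LinearMap.ker T).starProjection (T x) = 0 := by
  have hker : LinearMap.ker T = (LinearMap.range T)ᗮ := by
    rw [T.orthogonal_range, hT, LinearMap.ker_neg]
  rw [Submodule.starProjection_apply_eq_zero_iff, hker]
  exact Submodule.le_orthogonal_orthogonal _ (LinearMap.mem_range_self T x)

end SkewAdjoint

theorem Matrix.adjoint_toEuclideanLin_of_transpose_eq_neg {n : ℕ}
    {A : Matrix (Fin n) (Fin n) ℝ} (hA : Aᵀ = -A) :
    A.toEuclideanLin.adjoint = -A.toEuclideanLin := by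
  rw [← Matrix.toEuclideanLin_conjTranspose_eq_adjoint,
    Matrix.conjTranspose_eq_transpose_of_trivial, hA, map_neg]

section LinearODE

variable {E : Type*} [NormedAddCommGroup E] [NormedSpace ℝ E]

theorem eq_of_hasDerivAt_of_hasDerivAt {f g f' : ℝ → E} (hf : ∀ s, HasDerivAt f (f' s) s)
    (hg : ∀ s, HasDerivAt g (f' s) s) {t₀ : ℝ} (h₀ : f t₀ = g t₀) : f = g :=
  eq_of_fderiv_eq (fun s => (hf s).differentiableAt) (fun s => (hg s).differentiableAt)
    (fun s => (hf s).hasFDerivAt.fderiv.trans (hg s).hasFDerivAt.fderiv.symm) t₀ h₀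

theorem eq_zero_of_hasDerivAt_eq_smul_self {a : ℝ → ℝ} {y : ℝ → E} (ha : Continuous a)
    (hy : ∀ s, HasDerivAt y (a s • y s) s) {t₀ : ℝ} (h₀ : y t₀ = 0) : y = 0 := by
  set A : ℝ → ℝ := fun s => ∫ t in t₀..s, a t
  have hA : ∀ s, HasDerivAt A (a s) s := fun s =>
    intervalIntegral.integral_hasDerivAt_right (ha.intervalIntegrable _ _)
      ha.stronglyMeasurable.stronglyMeasurableAtFilter ha.continuousAt
  have hconst : ∀ s, HasDerivAt (fun s => Real.exp (-A s) • y s) 0 s := by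
    intro s
    refine (((hA s).neg.exp).smul (hy s)).congr_deriv ?_
    rw [smul_smul]
    module
  funext s
  have h := is_const_of_deriv_eq_zero (fun s => (hconst s).differentiableAt)
    (fun s => (hconst s).deriv) s t₀
  simpa [A, h₀, Real.exp_ne_zero] using h

end LinearODE

section SecondOrder

variable {E : Type*} [NormedAddCommGroup E] [NormedSpace ℝ E]
  {lam Φ₁ Φ₁' Φp Φp' : ℝ → ℝ} {Z Z' : ℝ → E} {v : E}

theorem eq_add_smul_add_smul_of_hasDerivAt (hlam : Continuous lam)
    (hZ : ∀ s, HasDerivAt Z (Z' s) s) (hZ' : ∀ s, HasDerivAt Z' (v + lam s • Z' s) s)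
    (hΦ₁ : ∀ s, HasDerivAt Φ₁ (Φ₁' s) s) (hΦ₁' : ∀ s, HasDerivAt Φ₁' (lam s * Φ₁' s) s)
    (hΦ₁0 : Φ₁ 0 = 0) (hΦ₁'0 : Φ₁' 0 = 1)
    (hΦp : ∀ s, HasDerivAt Φp (Φp' s) s) (hΦp' : ∀ s, HasDerivAt Φp' (lam s * Φp' s + 1) s)
    (hΦp0 : Φp 0 = 0) (hΦp'0 : Φp' 0 = 0) (s : ℝ) :
    Z s = Z 0 + Φ₁ s • Z' 0 + Φp s • v := by
  have hdiff : (fun s => Z' s - (Φ₁' s • Z' 0 + Φp' s • v)) = 0 := by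
    refine eq_zero_of_hasDerivAt_eq_smul_self hlam (fun s => ?_) (t₀ := 0)
      (by simp [hΦ₁'0, hΦp'0])
    refine ((hZ' s).sub (((hΦ₁' s).smul_const _).add ((hΦp' s).smul_const v))).congr_deriv ?_
    module
  have hZ'eq : ∀ s, Z' s = Φ₁' s • Z' 0 + Φp' s • v := fun s =>
    sub_eq_zero.1 (congrFun hdiff s)
  refine congrFun (eq_of_hasDerivAt_of_hasDerivAt (g := fun s => Z 0 + Φ₁ s • Z' 0 + Φp s • v)
    hZ (fun s => ?_) (t₀ := 0) ?_) s
  · exact ((((hΦ₁ s).smul_const (Z' 0)).const_add (Z 0)).add ((hΦp s).smul_const v)).congr_deriv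
      (hZ'eq s).symm
  · simp [hΦ₁0, hΦp0]

end SecondOrder

theorem stmt12_general (n : ℕ) (A : Matrix (Fin n) (Fin n) ℝ) (hA : Aᵀ = -A)
    (v : EuclideanSpace ℝ (Fin n)) (hv : A.toEuclideanLin v = 0)
    (C : ℝ → EuclideanSpace ℝ (Fin n)) (lam : ℝ → ℝ)
    (hC : ContDiff ℝ 2 C)
    (hlam : ∀ s, lam s = -⟪A.toEuclideanLin (C s) + v, deriv C s⟫)
    (heq : ∀ s, deriv (deriv C) s
      = A.toEuclideanLin (C s) + v + lam s • deriv C s)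
    (Z : ℝ → EuclideanSpace ℝ (Fin n))
    (hZ : ∀ s, Z s =
      (Submodule.orthogonalProjection (LinearMap.ker A.toEuclideanLin) (C s) :
        EuclideanSpace ℝ (Fin n)))
    (Φ₁ Φp : ℝ → ℝ)
    (hΦ₁ : ContDiff ℝ 2 Φ₁)
    (hΦ₁eq : ∀ s, deriv (deriv Φ₁) s = lam s * deriv Φ₁ s)
    (hΦ₁0 : Φ₁ 0 = 0) (hΦ₁0' : deriv Φ₁ 0 = 1)
    (hΦp : ContDiff ℝ 2 Φp)
    (hΦpeq : ∀ s, deriv (deriv Φp) s = lam s * deriv Φp s + 1)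
    (hΦp0 : Φp 0 = 0) (hΦp0' : deriv Φp 0 = 0) :
    (∀ s, deriv (deriv Z) s = v + lam s • deriv Z s) ∧
    (∀ s, Z s = Z 0 + Φ₁ s • deriv Z 0 + Φp s • v) := by
  set P := (LinearMap.ker A.toEuclideanLin).starProjection
  have hPA : ∀ x, P (A.toEuclideanLin x) = 0 :=
    LinearMap.starProjection_ker_apply_self_of_adjoint_eq_neg
      (Matrix.adjoint_toEuclideanLin_of_transpose_eq_neg hA)
  have hPv : P v = v := Submodule.starProjection_eq_self_iff.2 hv
  have hZ₁ : ∀ s, HasDerivAt Z (P (deriv C s)) s := fun s =>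
    funext hZ ▸ P.hasFDerivAt.comp_hasDerivAt s ((hC.differentiable two_ne_zero) s).hasDerivAt
  have hZ₂ : ∀ s, HasDerivAt (fun s => P (deriv C s)) (v + lam s • P (deriv C s)) s := by
    intro s
    refine (P.hasFDerivAt.comp_hasDerivAt s
      (hC.differentiable_deriv_two s).hasDerivAt).congr_deriv ?_
    simp only [heq s, map_add, map_smul, hPA, hPv, zero_add]
  have hdZ : deriv Z = fun s => P (deriv C s) := funext fun s => (hZ₁ s).deriv
  have hlamc : Continuous lam := by
    rw [funext hlam]
    exact ((A.toEuclideanLin.continuous_of_finiteDimensional.comp hC.continuous).add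
      continuous_const |>.inner (hC.continuous_deriv one_le_two)).neg
  refine ⟨fun s => by rw [hdZ]; exact (hZ₂ s).deriv, fun s => ?_⟩
  rw [hdZ]
  exact eq_add_smul_add_smul_of_hasDerivAt hlamc hZ₁ hZ₂
    (fun s => (hΦ₁.differentiable two_ne_zero s).hasDerivAt)
    (fun s => hΦ₁eq s ▸ (hΦ₁.differentiable_deriv_two s).hasDerivAt) hΦ₁0 hΦ₁0'
    (fun s => (hΦp.differentiable two_ne_zero s).hasDerivAt)
    (fun s => hΦpeq s ▸ (hΦp.differentiable_deriv_two s).hasDerivAt) hΦp0 hΦp0' s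

theorem stmt12 (n : ℕ) (A : Matrix (Fin n) (Fin n) ℝ) (hA : Aᵀ = -A)
    (v : EuclideanSpace ℝ (Fin n)) (hv : A.toEuclideanLin v = 0)
    (C : ℝ → EuclideanSpace ℝ (Fin n)) (lam : ℝ → ℝ)
    (hC : ContDiff ℝ 2 C)
    (harc : ∀ s, ‖deriv C s‖ = 1)
    (hlam : ∀ s, lam s = -⟪A.toEuclideanLin (C s) + v, deriv C s⟫)
    (heq : ∀ s, deriv (deriv C) s
      = A.toEuclideanLin (C s) + v + lam s • deriv C s)
    (Z : ℝ → EuclideanSpace ℝ (Fin n))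
    (hZ : ∀ s, Z s =
      (Submodule.orthogonalProjection (LinearMap.ker A.toEuclideanLin) (C s) :
        EuclideanSpace ℝ (Fin n)))
    (Φ₁ Φp : ℝ → ℝ)
    (hΦ₁ : ContDiff ℝ 2 Φ₁)
    (hΦ₁eq : ∀ s, deriv (deriv Φ₁) s = lam s * deriv Φ₁ s)
    (hΦ₁0 : Φ₁ 0 = 0) (hΦ₁0' : deriv Φ₁ 0 = 1)
    (hΦp : ContDiff ℝ 2 Φp)
    (hΦpeq : ∀ s, deriv (deriv Φp) s = lam s * deriv Φp s + 1)
    (hΦp0 : Φp 0 = 0) (hΦp0' : deriv Φp 0 = 0) :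
    (∀ s, deriv (deriv Z) s = v + lam s • deriv Z s) ∧
    (∀ s, Z s = Z 0 + Φ₁ s • deriv Z 0 + Φp s • v) :=
  stmt12_general n A hA v hv C lam hC hlam heq Z hZ Φ₁ Φp hΦ₁ hΦ₁eq hΦ₁0 hΦ₁0' hΦp hΦpeq hΦp0 hΦp0'
end

section
/- Let C : ℝ → ℝⁿ be an arclength-parametrized purely rotating soliton (C'' = AC + λC', A antisymmetric, λ = -⟨C', AC⟩), and let Z = Π_{ker A}∘C. Suppose λ(s) ≥ 0 for all s and Z'(s₀) ≠ 0 for some s₀. Then ∫_{s₀}^∞ λ(s) ds ≤ -ln‖Z'(s₀)‖ < ∞, and lim_{s→∞} λ(s) = 0. -/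
open Matrix Filter MeasureTheory Set
open scoped RealInnerProductSpace

/-!
Projecting the soliton equation `C'' = A C + λ C'` onto `ker A` kills `A C`, because the range
of an antisymmetric map is orthogonal to its kernel. Hence `Z' = Π C'` solves the scalar linear
equation `Z'' = λ Z'`, so `Z'(s) = exp (∫_{s₀}^s λ) Z'(s₀)`. As `‖Z'(s)‖ ≤ ‖C'(s)‖ = 1`, every
partial integral of `λ` is at most `-log ‖Z'(s₀)‖`, so `λ ≥ 0` is integrable on `(s₀, ∞)`.
Finally `λ' = -‖C''‖² ≤ 0`, and a nonnegative antitone integrable function tends to `0`.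
-/

theorem Matrix.inner_toEuclideanLin_of_transpose_eq_neg {n : Type*} [Fintype n] [DecidableEq n]
    {A : Matrix n n ℝ} (hA : Aᵀ = -A) (x y : EuclideanSpace ℝ n) :
    ⟪A.toEuclideanLin x, y⟫ = -⟪x, A.toEuclideanLin y⟫ := by
  rw [← LinearMap.adjoint_inner_right, ← Matrix.toEuclideanLin_conjTranspose_eq_adjoint,
    conjTranspose_eq_transpose_of_trivial, hA, map_neg, LinearMap.neg_apply, inner_neg_right]

section Skew

variable {E : Type*} [NormedAddCommGroup E] [InnerProductSpace ℝ E] {T : E →ₗ[ℝ] E}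

theorem inner_apply_self_eq_zero_of_skew (hT : ∀ x y, ⟪T x, y⟫ = -⟪x, T y⟫) (x : E) :
    ⟪x, T x⟫ = 0 := by
  have h := hT x x
  rw [real_inner_comm] at h
  linarith

theorem apply_mem_orthogonal_ker_of_skew (hT : ∀ x y, ⟪T x, y⟫ = -⟪x, T y⟫) (x : E) :
    T x ∈ (LinearMap.ker T)ᗮ := fun u hu => by
  rw [real_inner_comm, hT, LinearMap.mem_ker.mp hu, inner_zero_right, neg_zero]

theorem starProjection_ker_apply_eq_zero_of_skew [(LinearMap.ker T).HasOrthogonalProjection]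
    (hT : ∀ x y, ⟪T x, y⟫ = -⟪x, T y⟫) (x : E) :
    (LinearMap.ker T).starProjection (T x) = 0 :=
  (Submodule.starProjection_apply_eq_zero_iff _).mpr (apply_mem_orthogonal_ker_of_skew hT x)

end Skew

theorem HasDerivAt.inner_apply_eq_zero_of_norm_eq {E : Type*} [NormedAddCommGroup E]
    [InnerProductSpace ℝ E] {f : ℝ → E} {f' : E} {t r : ℝ} (hf : HasDerivAt f f' t)
    (hnorm : ∀ s, ‖f s‖ = r) : ⟪f', f t⟫ = 0 := by
  have hsq : HasDerivAt (fun s => ⟪f s, f s⟫) (⟪f t, f'⟫ + ⟪f', f t⟫) t := hf.inner ℝ hf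
  have hconst : (fun s => ⟪f s, f s⟫) = fun _ => r ^ 2 := by
    funext s
    rw [real_inner_self_eq_norm_sq, hnorm]
  rw [hconst] at hsq
  have h := hsq.unique (hasDerivAt_const t _)
  rw [real_inner_comm] at h
  linarith

theorem eq_exp_intervalIntegral_smul_of_hasDerivAt {F : Type*} [NormedAddCommGroup F]
    [NormedSpace ℝ F] {g : ℝ → F} {a : ℝ → ℝ} (ha : Continuous a)
    (hg : ∀ s, HasDerivAt g (a s • g s) s) (s₀ s : ℝ) :
    g s = Real.exp (∫ t in s₀..s, a t) • g s₀ := by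
  set I : ℝ → ℝ := fun s => ∫ t in s₀..s, a t
  have hI : ∀ s, HasDerivAt I (a s) s := fun s =>
    intervalIntegral.integral_hasDerivAt_right (ha.intervalIntegrable _ _)
      (ha.stronglyMeasurableAtFilter _ _) ha.continuousAt
  have hconst : ∀ s, HasDerivAt (fun s => Real.exp (-I s) • g s) 0 s := fun s => by
    have h := (hI s).neg.exp.smul (hg s)
    rwa [smul_smul, ← add_smul, mul_neg, mul_comm, add_neg_cancel, zero_smul] at h
  have h := is_const_of_deriv_eq_zero (fun x => (hconst x).differentiableAt)
    (fun x => (hconst x).deriv) s s₀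
  simp only [I, intervalIntegral.integral_same, neg_zero, Real.exp_zero, one_smul] at h
  rw [← h, smul_smul, ← Real.exp_add, add_neg_cancel, Real.exp_zero, one_smul]

theorem le_neg_log_norm_of_norm_exp_smul_le_one {F : Type*} [NormedAddCommGroup F]
    [NormedSpace ℝ F] {v : F} (hv : v ≠ 0) {x : ℝ} (h : ‖Real.exp x • v‖ ≤ 1) :
    x ≤ -Real.log ‖v‖ := by
  have hv' : 0 < ‖v‖ := norm_pos_iff.mpr hv
  rw [norm_smul, Real.norm_of_nonneg (Real.exp_pos x).le] at h
  have hlog := Real.log_nonpos (by positivity) h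
  rw [Real.log_mul (Real.exp_ne_zero x) hv'.ne', Real.log_exp] at hlog
  linarith

theorem ContinuousLinearMap.deriv_comp_apply {E F : Type*} [NormedAddCommGroup E]
    [NormedSpace ℝ E] [NormedAddCommGroup F] [NormedSpace ℝ F] (P : E →L[ℝ] F) {C : ℝ → E}
    (hC : Differentiable ℝ C) : deriv (fun s => P (C s)) = fun s => P (deriv C s) :=
  funext fun s => (P.hasFDerivAt.comp_hasDerivAt s (hC s).hasDerivAt).deriv

section ImproperIntegral

variable {f : ℝ → ℝ} {a M : ℝ}

theorem integrableOn_Ioi_of_intervalIntegral_le (hf : Continuous f) (hpos : ∀ s, 0 ≤ f s)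
    (hM : ∀ t, ∫ s in a..t, f s ≤ M) : IntegrableOn f (Ioi a) := by
  refine integrableOn_Ioi_of_intervalIntegral_norm_bounded M a
    (fun t => (hf.intervalIntegrable a t).1) tendsto_id (Eventually.of_forall fun t => ?_)
  simpa only [id, Real.norm_of_nonneg (hpos _)] using hM t

theorem setIntegral_Ioi_le_of_intervalIntegral_le (hf : Continuous f) (hpos : ∀ s, 0 ≤ f s)
    (hM : ∀ t, ∫ s in a..t, f s ≤ M) : ∫ s in Ioi a, f s ≤ M :=
  le_of_tendsto
    (intervalIntegral_tendsto_integral_Ioi a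
      (integrableOn_Ioi_of_intervalIntegral_le hf hpos hM) tendsto_id)
    (Eventually.of_forall hM)

/-- A positive lower bound of `f` would make the constant function integrable on `Ioi a`. -/
theorem Antitone.tendsto_atTop_zero_of_integrableOn_Ioi (hf : Antitone f)
    (hpos : ∀ s, 0 ≤ f s) (hint : IntegrableOn f (Ioi a)) : Tendsto f atTop (nhds 0) := by
  have hbdd : BddBelow (range f) := ⟨0, by rintro _ ⟨s, rfl⟩; exact hpos s⟩
  suffices hinf : ⨅ s, f s = 0 from hinf ▸ tendsto_atTop_ciInf hf hbdd
  refine le_antisymm (not_lt.mp fun hinf_pos => ?_) (le_ciInf hpos)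
  have hconst : IntegrableOn (fun _ => ⨅ s, f s) (Ioi a) :=
    hint.mono' aestronglyMeasurable_const
      (ae_of_all _ fun x => (Real.norm_of_nonneg hinf_pos.le).trans_le (ciInf_le hbdd x))
  rw [IntegrableOn, integrable_const_iff, isFiniteMeasure_restrict, Real.volume_Ioi] at hconst
  exact hconst.elim hinf_pos.ne' (fun h => h rfl)

end ImproperIntegral

section Soliton

variable {E : Type*} [NormedAddCommGroup E] [InnerProductSpace ℝ E]

structure IsPurelyRotatingSoliton (T : E →L[ℝ] E) (C : ℝ → E) (lam : ℝ → ℝ) : Prop where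
  contDiff : ContDiff ℝ 2 C
  norm_deriv : ∀ s, ‖deriv C s‖ = 1
  lam_eq : ∀ s, lam s = -⟪deriv C s, T (C s)⟫
  deriv_deriv : ∀ s, deriv (deriv C) s = T (C s) + lam s • deriv C s

namespace IsPurelyRotatingSoliton

variable {T : E →L[ℝ] E} {C : ℝ → E} {lam : ℝ → ℝ} (hC : IsPurelyRotatingSoliton T C lam)
include hC

theorem differentiable : Differentiable ℝ C :=
  hC.contDiff.differentiable two_ne_zero

theorem differentiable_deriv : Differentiable ℝ (deriv C) :=
  ((contDiff_succ_iff_deriv (n := 1)).mp hC.contDiff).2.2.differentiable one_ne_zero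

theorem hasDerivAt_lam (hT : ∀ x y, ⟪T x, y⟫ = -⟪x, T y⟫) (s : ℝ) :
    HasDerivAt lam (-‖deriv (deriv C) s‖ ^ 2) s := by
  have hC'' := (hC.differentiable_deriv s).hasDerivAt
  have hTC : HasDerivAt (fun t => T (C t)) (T (deriv C s)) s :=
    T.hasFDerivAt.comp_hasDerivAt s (hC.differentiable s).hasDerivAt
  have hTC' : ⟪deriv C s, T (deriv C s)⟫ = 0 :=
    inner_apply_self_eq_zero_of_skew (T := (T : E →ₗ[ℝ] E)) hT _
  have hunit : ⟪deriv (deriv C) s, deriv C s⟫ = 0 :=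
    hC''.inner_apply_eq_zero_of_norm_eq hC.norm_deriv
  -- `⟪C'', T C⟫ = ⟪C'', C'' - λ C'⟫ = ‖C''‖²` as `C'' ⊥ C'`
  have hC''TC : ⟪deriv (deriv C) s, T (C s)⟫ = ‖deriv (deriv C) s‖ ^ 2 := by
    rw [eq_sub_of_add_eq (hC.deriv_deriv s).symm, inner_sub_right, real_inner_self_eq_norm_sq,
      real_inner_smul_right, hunit, mul_zero, sub_zero]
  have h := (hC''.inner ℝ hTC).neg
  rw [hTC', hC''TC, zero_add] at h
  exact (funext hC.lam_eq : lam = _) ▸ h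

theorem antitone_lam (hT : ∀ x y, ⟪T x, y⟫ = -⟪x, T y⟫) : Antitone lam :=
  antitone_of_deriv_nonpos (fun s => (hC.hasDerivAt_lam hT s).differentiableAt)
    fun s => (hC.hasDerivAt_lam hT s).deriv ▸ neg_nonpos.mpr (sq_nonneg _)

theorem continuous_lam (hT : ∀ x y, ⟪T x, y⟫ = -⟪x, T y⟫) : Continuous lam :=
  continuous_iff_continuousAt.mpr fun s => (hC.hasDerivAt_lam hT s).continuousAt

theorem hasDerivAt_deriv_comp_clm {F : Type*} [NormedAddCommGroup F] [NormedSpace ℝ F]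
    (P : E →L[ℝ] F) (hP : ∀ x, P (T x) = 0) (s : ℝ) :
    HasDerivAt (deriv fun s => P (C s)) (lam s • deriv (fun s => P (C s)) s) s := by
  have h := P.hasFDerivAt.comp_hasDerivAt s (hC.differentiable_deriv s).hasDerivAt
  rw [hC.deriv_deriv, map_add, hP, zero_add, map_smul] at h
  rwa [P.deriv_comp_apply hC.differentiable]

end IsPurelyRotatingSoliton

end Soliton

theorem stmt14 (n : ℕ) (A : Matrix (Fin n) (Fin n) ℝ) (hA : Aᵀ = -A)
    (C : ℝ → EuclideanSpace ℝ (Fin n)) (lam : ℝ → ℝ)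
    (hC : ContDiff ℝ 2 C)
    (harc : ∀ s, ‖deriv C s‖ = 1)
    (hlam : ∀ s, lam s = -⟪deriv C s, A.toEuclideanLin (C s)⟫)
    (heq : ∀ s, deriv (deriv C) s
      = A.toEuclideanLin (C s) + lam s • deriv C s)
    (Z : ℝ → EuclideanSpace ℝ (Fin n))
    (hZ : ∀ s, Z s =
      (Submodule.orthogonalProjectionOnto (LinearMap.ker A.toEuclideanLin) (C s) :
        EuclideanSpace ℝ (Fin n)))
    (hpos : ∀ s, 0 ≤ lam s)
    (s₀ : ℝ) (hZ' : deriv Z s₀ ≠ 0) :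
    (∫ s in Set.Ioi s₀, lam s) ≤ -Real.log ‖deriv Z s₀‖ ∧
    Tendsto lam atTop (nhds 0) := by
  set T := LinearMap.toContinuousLinearMap A.toEuclideanLin
  have hT : ∀ x y, ⟪A.toEuclideanLin x, y⟫ = -⟪x, A.toEuclideanLin y⟫ :=
    inner_toEuclideanLin_of_transpose_eq_neg hA
  have hsol : IsPurelyRotatingSoliton T C lam := ⟨hC, harc, hlam, heq⟩
  set P := (LinearMap.ker A.toEuclideanLin).starProjection
  have hZP : Z = fun s => P (C s) := funext hZ
  have hlam_cont := hsol.continuous_lam hT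
  have hZ'' : ∀ s, HasDerivAt (deriv Z) (lam s • deriv Z s) s := hZP ▸
    hsol.hasDerivAt_deriv_comp_clm P (starProjection_ker_apply_eq_zero_of_skew hT)
  have hbound : ∀ t, ∫ s in s₀..t, lam s ≤ -Real.log ‖deriv Z s₀‖ := fun t => by
    refine le_neg_log_norm_of_norm_exp_smul_le_one hZ' ?_
    rw [← eq_exp_intervalIntegral_smul_of_hasDerivAt hlam_cont hZ'', hZP,
      P.deriv_comp_apply hsol.differentiable, ← harc t]
    exact Submodule.norm_starProjection_apply_le _ _
  exact ⟨setIntegral_Ioi_le_of_intervalIntegral_le hlam_cont hpos hbound,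
    (hsol.antitone_lam hT).tendsto_atTop_zero_of_integrableOn_Ioi hpos
      (integrableOn_Ioi_of_intervalIntegral_le hlam_cont hpos hbound)⟩
end

section
/- Let α < 0 and A antisymmetric. Suppose C is an arclength-parametrized soliton with C'' = 𝔭_{C'}((α+A)C) on which AC(s) = γ·C'(s) for a nonzero constant γ (i.e., V constant and not in ker A). Then γ² = -Ω²/α where -Ω² is the eigenvalue of A² such that A²C = γ²α C, the curve satisfies C'' = α C, ‖C(s)‖ = 1/√(-α) for all s, and C(s) = e^{(s/γ)A} C(0) is a circle of radius (-α)^{-1/2}. -/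
/-! Skew-symmetry of `A` gives `⟪C, C'⟫ = γ⁻¹ ⟪A C, C⟫ = 0`, so the tangential coefficient
`⟪(α + A) C, C'⟫` equals `γ` and the soliton equation collapses to `C'' = α C`. Differentiating
`⟪C, C'⟫ = 0` gives `α ‖C‖² + ‖C'‖² = 0`, hence `‖C‖² = -1/α`. Since `C' = γ⁻¹ A C`, the curve solves
a linear ODE, so `C s = exp ((s/γ) A) C 0`, and differentiating `A C = γ C'` gives `A² C = γ² α C`. -/

open Matrix
open scoped RealInnerProductSpace

theorem Matrix.inner_toEuclideanCLM_self_eq_zero {n : Type*} [Fintype n] [DecidableEq n]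
    {A : Matrix n n ℝ} (hA : Aᵀ = -A) (x : EuclideanSpace ℝ n) :
    ⟪toEuclideanCLM (𝕜 := ℝ) A x, x⟫ = 0 := by
  have h : x ⬝ᵥ A *ᵥ x = -(x ⬝ᵥ A *ᵥ x) := by
    conv_lhs => rw [dotProduct_mulVec, ← mulVec_transpose, hA, neg_mulVec, neg_dotProduct,
      dotProduct_comm]
  rw [real_inner_comm, inner_toEuclideanCLM]
  linarith

theorem Matrix.toEuclideanCLM_exp {𝕜 n : Type*} [RCLike 𝕜] [Fintype n] [DecidableEq n]
    (A : Matrix n n 𝕜) :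
    toEuclideanCLM (𝕜 := 𝕜) (NormedSpace.exp A) = NormedSpace.exp (toEuclideanCLM (𝕜 := 𝕜) A) := by
  open scoped Matrix.Norms.L2Operator in
  exact NormedSpace.map_exp_of_mem_ball (𝕂 := 𝕜) (toEuclideanCLM (n := n) (𝕜 := 𝕜))
    (toEuclideanCLM (n := n) (𝕜 := 𝕜)).toAlgEquiv.toLinearMap.continuous_of_finiteDimensional A
    ((NormedSpace.expSeries_radius_eq_top 𝕜 (Matrix n n 𝕜)).symm ▸ edist_lt_top _ _)

theorem eq_exp_smul_apply_of_hasDerivAt {E : Type*} [NormedAddCommGroup E] [NormedSpace ℝ E]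
    [CompleteSpace E] {L : E →L[ℝ] E} {C : ℝ → E} (hC : ∀ t, HasDerivAt C (L (C t)) t) (s : ℝ) :
    C s = NormedSpace.exp (s • L) (C 0) := by
  have hconst : ∀ t, HasDerivAt (fun t => NormedSpace.exp ((s - t) • L) (C t)) 0 t := by
    intro t
    have hexp := (hasDerivAt_exp_smul_const L (s - t)).scomp t ((hasDerivAt_id t).const_sub s)
    simpa [Function.comp_def] using hexp.clm_apply (hC t)
  simpa using is_const_of_deriv_eq_zero (fun t => (hconst t).differentiableAt)
    (fun t => (hconst t).deriv) s 0

section SkewCurve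

variable {E : Type*} [NormedAddCommGroup E] [InnerProductSpace ℝ E]
  {L : E →L[ℝ] E} {C : ℝ → E} {γ : ℝ}

theorem hasDerivAt_of_map_eq_smul_deriv (hC : Differentiable ℝ C) (hγ0 : γ ≠ 0)
    (hγ : ∀ s, L (C s) = γ • deriv C s) (s : ℝ) : HasDerivAt C (γ⁻¹ • L (C s)) s := by
  rw [hγ, inv_smul_smul₀ hγ0]
  exact (hC s).hasDerivAt

theorem hasDerivAt_deriv_of_map_eq_smul_deriv (hC : Differentiable ℝ C) (hγ0 : γ ≠ 0)
    (hγ : ∀ s, L (C s) = γ • deriv C s) (s : ℝ) :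
    HasDerivAt (deriv C) (γ⁻¹ • L (deriv C s)) s := by
  convert (L.hasFDerivAt.comp_hasDerivAt s (hC s).hasDerivAt).const_smul γ⁻¹ using 1
  exact funext fun t => (hasDerivAt_of_map_eq_smul_deriv hC hγ0 hγ t).deriv

theorem inner_deriv_eq_zero_of_map_eq_smul_deriv (hL : ∀ x, ⟪L x, x⟫ = 0) (hγ0 : γ ≠ 0)
    (hγ : ∀ s, L (C s) = γ • deriv C s) (s : ℝ) : ⟪C s, deriv C s⟫ = 0 := by
  have h := hL (C s)
  rwa [hγ, real_inner_smul_left, mul_eq_zero, or_iff_right hγ0, real_inner_comm] at h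

end SkewCurve

theorem norm_eq_one_div_sqrt_of_hasDerivAt_deriv {E : Type*} [NormedAddCommGroup E]
    [InnerProductSpace ℝ E] {C : ℝ → E} {α : ℝ} (hC : Differentiable ℝ C)
    (hC'' : ∀ s, HasDerivAt (deriv C) (α • C s) s) (harc : ∀ s, ‖deriv C s‖ = 1)
    (horth : ∀ s, ⟪C s, deriv C s⟫ = 0) (s : ℝ) : ‖C s‖ = 1 / √(-α) := by
  have hconst : HasDerivAt (fun t => ⟪C t, deriv C t⟫) 0 s := by
    simpa only [horth] using hasDerivAt_const s (0 : ℝ)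
  have h := hconst.unique ((hC s).hasDerivAt.inner ℝ (hC'' s))
  rw [real_inner_smul_right, real_inner_self_eq_norm_sq, real_inner_self_eq_norm_sq, harc] at h
  have hα : α ≠ 0 := by
    rintro rfl
    norm_num at h
  have hsq : ‖C s‖ ^ 2 = 1 / -α := by
    field_simp
    linarith
  rw [← Real.sqrt_sq (norm_nonneg _), hsq, one_div, one_div, Real.sqrt_inv]

theorem stmt18_general (n : ℕ) (α : ℝ)
    (A : Matrix (Fin n) (Fin n) ℝ) (hA : Aᵀ = -A)
    (C : ℝ → EuclideanSpace ℝ (Fin n)) (γ : ℝ) (hγ0 : γ ≠ 0)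
    (harc : ∀ s, ‖deriv C s‖ = 1)
    (heq : ∀ s, deriv (deriv C) s
      = (α • C s + A.toEuclideanLin (C s))
        - ⟪α • C s + A.toEuclideanLin (C s), deriv C s⟫ • deriv C s)
    (hγ : ∀ s, A.toEuclideanLin (C s) = γ • deriv C s) :
    (∀ s, deriv (deriv C) s = α • C s) ∧
    (∀ s, (A * A).toEuclideanLin (C s) = (γ ^ 2 * α) • C s) ∧
    (∀ s, ‖C s‖ = 1 / Real.sqrt (-α)) ∧
    (∀ s, C s = (NormedSpace.exp ((s / γ) • A)).toEuclideanLin (C 0)) := by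
  simp only [← coe_toEuclideanCLM_eq_toEuclideanLin, ContinuousLinearMap.coe_coe] at heq hγ ⊢
  set L := toEuclideanCLM (𝕜 := ℝ) A
  -- `deriv C` is junk (zero) where `C` is not differentiable, so `‖C'‖ = 1` forces differentiability.
  have hC : Differentiable ℝ C := fun s =>
    differentiableAt_of_deriv_ne_zero (norm_ne_zero_iff.mp (by rw [harc]; exact one_ne_zero))
  have horth :=
    inner_deriv_eq_zero_of_map_eq_smul_deriv (inner_toEuclideanCLM_self_eq_zero hA) hγ0 hγ
  have hC'' : ∀ s, deriv (deriv C) s = α • C s := by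
    intro s
    have hcoef : ⟪α • C s + L (C s), deriv C s⟫ = γ := by
      rw [hγ, inner_add_left, real_inner_smul_left, real_inner_smul_left, horth,
        real_inner_self_eq_norm_sq, harc]
      ring
    rw [heq s, hcoef, hγ, add_sub_cancel_right]
  have hLC' : ∀ s, L (deriv C s) = γ • deriv (deriv C) s := fun s => by
    rw [(hasDerivAt_deriv_of_map_eq_smul_deriv hC hγ0 hγ s).deriv, smul_inv_smul₀ hγ0]
  refine ⟨hC'', fun s => ?_, norm_eq_one_div_sqrt_of_hasDerivAt_deriv hC (fun s => ?_) harc horth,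
    fun s => ?_⟩
  · rw [map_mul, mul_apply_eq_comp, hγ, map_smul, hLC', hC'', smul_smul, smul_smul, sq, mul_assoc]
  · rw [← hC'' s]
    exact (hasDerivAt_deriv_of_map_eq_smul_deriv hC hγ0 hγ s).differentiableAt.hasDerivAt
  · rw [toEuclideanCLM_exp, map_smul, div_eq_mul_inv, ← smul_smul]
    exact eq_exp_smul_apply_of_hasDerivAt (L := γ⁻¹ • L)
      (hasDerivAt_of_map_eq_smul_deriv hC hγ0 hγ) s

theorem stmt18 (n : ℕ) (α : ℝ) (hα : α < 0)
    (A : Matrix (Fin n) (Fin n) ℝ) (hA : Aᵀ = -A)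
    (C : ℝ → EuclideanSpace ℝ (Fin n)) (γ : ℝ) (hγ0 : γ ≠ 0)
    (hC : ContDiff ℝ 2 C)
    (harc : ∀ s, ‖deriv C s‖ = 1)
    (heq : ∀ s, deriv (deriv C) s
      = (α • C s + A.toEuclideanLin (C s))
        - ⟪α • C s + A.toEuclideanLin (C s), deriv C s⟫ • deriv C s)
    (hγ : ∀ s, A.toEuclideanLin (C s) = γ • deriv C s) :
    (∀ s, deriv (deriv C) s = α • C s) ∧
    (∀ s, (A * A).toEuclideanLin (C s) = (γ ^ 2 * α) • C s) ∧
    (∀ s, ‖C s‖ = 1 / Real.sqrt (-α)) ∧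
    (∀ s, C s = (NormedSpace.exp ((s / γ) • A)).toEuclideanLin (C 0)) :=
  stmt18_general n α A hA C γ hγ0 harc heq hγ
end

section
/- Let α > 0, A antisymmetric, and let C : [0,∞) → ℝⁿ (reparametrized by σ with dC/dσ = ‖a‖ dC/ds) satisfy dC/dσ = (α+A)C + g(σ) where ‖g(σ)‖ ≤ K e^{-ασ} for some constant K. Then the limit Γ = lim_{σ→∞} e^{-σ(α+A)} C(σ) exists and ‖C(σ) - e^{σ(α+A)} Γ‖ ≤ (K/(2α)) e^{-ασ} for all σ ≥ 0. -/
/-!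
Variation of constants: for `T = α + A`, the function `D σ = e^{-σT} C σ` has derivative
`e^{-σT} g σ`. Since `A` is antisymmetric, `e^{-σA}` is orthogonal, so `‖e^{-σT} v‖ = e^{-ασ} ‖v‖`
and this derivative is bounded by `K e^{-2ασ}`. Hence `D` is Cauchy at infinity, with a limit `Γ`
satisfying `‖D σ - Γ‖ ≤ K/(2α) e^{-2ασ}`; applying `e^{σT}`, which multiplies norms by `e^{ασ}`,
gives the bound.
-/

open Matrix Filter Topology NormedSpace

section ExponentialTail

variable {E : Type*} [NormedAddCommGroup E] [NormedSpace ℝ E]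

theorem norm_sub_le_of_norm_deriv_le_exp {D D' : ℝ → E} {K β a b : ℝ} (hβ : 0 < β)
    (hD : ∀ σ ≥ a, HasDerivAt D (D' σ) σ) (hD' : ∀ σ ≥ a, ‖D' σ‖ ≤ K * Real.exp (-β * σ))
    (hab : a ≤ b) :
    ‖D b - D a‖ ≤ K / β * (Real.exp (-β * a) - Real.exp (-β * b)) := by
  have hB : ∀ x, HasDerivAt (fun x => K / β * (Real.exp (-β * a) - Real.exp (-β * x)))
      (K * Real.exp (-β * x)) x := fun x => by
    have := (((hasDerivAt_id x).const_mul (-β)).exp.const_sub (Real.exp (-β * a))).const_mul (K / β)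
    refine this.congr_deriv ?_
    simp only [id, mul_one]
    field_simp
  refine image_norm_le_of_norm_deriv_right_le_deriv_boundary (f := fun x => D x - D a)
    ?_ (fun x hx => ((hD x hx.1).sub_const (D a)).hasDerivWithinAt) (by simp) hB
    (fun x hx => hD' x hx.1) ⟨hab, le_rfl⟩
  exact fun x hx => ((hD x hx.1).continuousAt.sub continuousAt_const).continuousWithinAt

theorem exists_tendsto_of_norm_deriv_le_exp [CompleteSpace E] {D D' : ℝ → E} {K β : ℝ}
    (hβ : 0 < β) (hD : ∀ σ ≥ 0, HasDerivAt D (D' σ) σ)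
    (hD' : ∀ σ ≥ 0, ‖D' σ‖ ≤ K * Real.exp (-β * σ)) :
    ∃ Γ, Tendsto D atTop (𝓝 Γ) ∧ ∀ σ ≥ 0, ‖D σ - Γ‖ ≤ K / β * Real.exp (-β * σ) := by
  have hK : 0 ≤ K := by simpa using (norm_nonneg _).trans (hD' 0 le_rfl)
  have htail : ∀ a b, 0 ≤ a → a ≤ b → ‖D b - D a‖ ≤ K / β * Real.exp (-β * a) := by
    intro a b ha hab
    refine (norm_sub_le_of_norm_deriv_le_exp hβ (fun σ hσ => hD σ (ha.trans hσ))
      (fun σ hσ => hD' σ (ha.trans hσ)) hab).trans ?_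
    gcongr
    exact sub_le_self _ (Real.exp_pos _).le
  have hsmall : Tendsto (fun σ => K / β * Real.exp (-β * σ)) atTop (𝓝 0) := by
    simpa using (Real.tendsto_exp_atBot.comp
      (tendsto_id.const_mul_atTop_of_neg (neg_lt_zero.mpr hβ))).const_mul (K / β)
  have hcauchy : CauchySeq D := by
    refine Metric.cauchySeq_iff'.mpr fun ε hε => ?_
    obtain ⟨N, hN₀, hN⟩ := ((hsmall.eventually (gt_mem_nhds hε)).and
      (eventually_ge_atTop 0)).exists
    refine ⟨N, fun b hb => ?_⟩
    rw [dist_eq_norm]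
    exact (htail N b hN hb).trans_lt hN₀
  obtain ⟨Γ, hΓ⟩ := cauchySeq_tendsto_of_complete hcauchy
  refine ⟨Γ, hΓ, fun σ hσ => ?_⟩
  have hdist : Tendsto (fun b => ‖D σ - D b‖) atTop (𝓝 ‖D σ - Γ‖) :=
    (tendsto_const_nhds.sub hΓ).norm
  refine le_of_tendsto hdist ?_
  filter_upwards [eventually_ge_atTop σ] with b hb
  rw [norm_sub_rev]
  exact htail σ b hσ hb

end ExponentialTail

section OperatorExp

variable {E : Type*} [NormedAddCommGroup E] [NormedSpace ℝ E] [CompleteSpace E]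

theorem ContinuousLinearMap.exp_smul_apply_exp_neg_smul_apply (T : E →L[ℝ] E) (σ : ℝ) (x : E) :
    exp (σ • T) (exp ((-σ) • T) x) = x := by
  let +nondep : NormedAlgebra ℚ (E →L[ℝ] E) := .restrictScalars ℚ ℝ _
  rw [← mul_apply_eq_comp,
    ← NormedSpace.exp_add_of_commute ((Commute.refl _).smul_left _ |>.smul_right _), ← add_smul, add_neg_cancel, zero_smul, exp_zero, one_apply_eq_self]

theorem ContinuousLinearMap.hasDerivAt_exp_neg_smul_apply {T : E →L[ℝ] E} {C : ℝ → E} {c : E}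
    {σ : ℝ} (hC : HasDerivAt C (T (C σ) + c) σ) :
    HasDerivAt (fun τ => exp ((-τ) • T) (C τ)) (exp ((-σ) • T) c) σ := by
  have hexp := (hasDerivAt_exp_smul_const (𝕂 := ℝ) T (-σ)).scomp σ (hasDerivAt_neg σ)
  refine (hexp.clm_apply hC).congr_deriv ?_
  simp

theorem ContinuousLinearMap.exp_smul_one_add (a : ℝ) (T : E →L[ℝ] E) :
    exp (a • 1 + T) = Real.exp a • exp T := by
  let +nondep : NormedAlgebra ℚ (E →L[ℝ] E) := .restrictScalars ℚ ℝ _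
  rw [NormedSpace.exp_add_of_commute ((Commute.one_left T).smul_left a),
    ← Algebra.algebraMap_eq_smul_one, ← algebraMap_exp_comm, Real.exp_eq_exp_ℝ, Algebra.smul_def]

end OperatorExp

section SkewAdjoint

variable {E : Type*} [NormedAddCommGroup E] [InnerProductSpace ℝ E] [CompleteSpace E]

theorem ContinuousLinearMap.norm_exp_apply_of_star_eq_neg {S : E →L[ℝ] E} (hS : star S = -S)
    (v : E) : ‖exp S v‖ = ‖v‖ := by
  let +nondep : NormedAlgebra ℚ (E →L[ℝ] E) := .restrictScalars ℚ ℝ _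
  have hU : exp S ∈ unitary (E →L[ℝ] E) :=
    exp_mem_unitary_of_mem_skewAdjoint (skewAdjoint.mem_iff.mpr hS)
  exact norm_map_of_mem_unitary hU v

theorem ContinuousLinearMap.norm_exp_smul_one_add_apply {S : E →L[ℝ] E} (hS : star S = -S)
    (a : ℝ) (v : E) : ‖exp (a • 1 + S) v‖ = Real.exp a * ‖v‖ := by
  rw [exp_smul_one_add, _root_.smul_apply, norm_smul, Real.norm_of_nonneg (Real.exp_pos a).le,
    norm_exp_apply_of_star_eq_neg hS]

end SkewAdjoint

namespace Matrix

variable {m : Type*} [Fintype m] [DecidableEq m]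

open scoped Matrix.Norms.L2Operator in
theorem toEuclideanLin_exp_apply {𝕜 : Type*} [RCLike 𝕜] (M : Matrix m m 𝕜)
    (v : EuclideanSpace 𝕜 m) :
    (exp M).toEuclideanLin v = exp (toEuclideanCLM (n := m) (𝕜 := 𝕜) M) v := by
  let +nondep : NormedAlgebra ℚ (Matrix m m 𝕜) := .restrictScalars ℚ 𝕜 _
  refine DFunLike.congr_fun (map_exp (toEuclideanCLM (n := m) (𝕜 := 𝕜)) ?_ M) v
  exact AddMonoidHomClass.continuous_of_bound _ 1 fun A => by rw [one_mul, ← cstar_norm_def]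

theorem norm_exp_toEuclideanCLM_smul_one_add_apply {A : Matrix m m ℝ} (hA : Aᵀ = -A) (a : ℝ)
    (v : EuclideanSpace ℝ m) :
    ‖exp (toEuclideanCLM (n := m) (𝕜 := ℝ) (a • 1 + A)) v‖ = Real.exp a * ‖v‖ := by
  have hS : star (toEuclideanCLM (n := m) (𝕜 := ℝ) A) = -toEuclideanCLM (n := m) (𝕜 := ℝ) A := by
    rw [← map_star, star_eq_conjTranspose, conjTranspose_eq_transpose_of_trivial, hA, map_neg]
  rw [map_add, _root_.map_smul, _root_.map_one,
    ContinuousLinearMap.norm_exp_smul_one_add_apply hS]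

end Matrix

theorem stmt19_general (n : ℕ) (α : ℝ) (hα : 0 < α)
    (A : Matrix (Fin n) (Fin n) ℝ) (hA : Aᵀ = -A) (K : ℝ)
    (C g : ℝ → EuclideanSpace ℝ (Fin n))
    (hgb : ∀ σ ≥ (0:ℝ), ‖g σ‖ ≤ K * Real.exp (-α * σ))
    (hC : ∀ σ ≥ (0:ℝ), HasDerivAt C
      ((α • (1 : Matrix (Fin n) (Fin n) ℝ) + A).toEuclideanLin (C σ) + g σ) σ) :
    ∃ Γ : EuclideanSpace ℝ (Fin n),
      Tendsto (fun σ =>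
          (NormedSpace.exp ((-σ) • (α • (1 : Matrix (Fin n) (Fin n) ℝ) + A))).toEuclideanLin
            (C σ)) atTop (nhds Γ) ∧
      ∀ σ ≥ (0:ℝ),
        ‖C σ - (NormedSpace.exp (σ • (α • (1 : Matrix (Fin n) (Fin n) ℝ) + A))).toEuclideanLin
            Γ‖ ≤ (K / (2 * α)) * Real.exp (-α * σ) := by
  set T := toEuclideanCLM (n := Fin n) (𝕜 := ℝ) (α • 1 + A)
  have hnorm (σ : ℝ) (v : EuclideanSpace ℝ (Fin n)) :
      ‖exp (σ • T) v‖ = Real.exp (α * σ) * ‖v‖ := by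
    have hσA : (σ • A)ᵀ = -(σ • A) := by rw [transpose_smul, hA, smul_neg]
    rw [← _root_.map_smul, smul_add, smul_smul, mul_comm,
      norm_exp_toEuclideanCLM_smul_one_add_apply hσA]
  simp_rw [toEuclideanLin_exp_apply, _root_.map_smul]
  have hdecay (σ : ℝ) (hσ : 0 ≤ σ) : ‖exp ((-σ) • T) (g σ)‖ ≤ K * Real.exp (-(2 * α) * σ) := by
    calc ‖exp ((-σ) • T) (g σ)‖ = Real.exp (α * -σ) * ‖g σ‖ := hnorm _ _
      _ ≤ Real.exp (α * -σ) * (K * Real.exp (-α * σ)) := by gcongr; exact hgb σ hσ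
      _ = K * Real.exp (-(2 * α) * σ) := by rw [mul_left_comm, ← Real.exp_add]; ring_nf
  obtain ⟨Γ, hlim, hΓ⟩ := exists_tendsto_of_norm_deriv_le_exp (by positivity)
    (fun σ hσ => ContinuousLinearMap.hasDerivAt_exp_neg_smul_apply (T := T) (hC σ hσ)) hdecay
  refine ⟨Γ, hlim, fun σ hσ => ?_⟩
  calc ‖C σ - exp (σ • T) Γ‖ = ‖exp (σ • T) (exp ((-σ) • T) (C σ) - Γ)‖ := by
        rw [map_sub, ContinuousLinearMap.exp_smul_apply_exp_neg_smul_apply]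
    _ = Real.exp (α * σ) * ‖exp ((-σ) • T) (C σ) - Γ‖ := hnorm _ _
    _ ≤ Real.exp (α * σ) * (K / (2 * α) * Real.exp (-(2 * α) * σ)) := by gcongr; exact hΓ σ hσ
    _ = K / (2 * α) * Real.exp (-α * σ) := by rw [mul_left_comm, ← Real.exp_add]; ring_nf

theorem stmt19 (n : ℕ) (α : ℝ) (hα : 0 < α)
    (A : Matrix (Fin n) (Fin n) ℝ) (hA : Aᵀ = -A) (K : ℝ)
    (C g : ℝ → EuclideanSpace ℝ (Fin n)) (hg : Continuous g)
    (hgb : ∀ σ ≥ (0:ℝ), ‖g σ‖ ≤ K * Real.exp (-α * σ))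
    (hC : ∀ σ ≥ (0:ℝ), HasDerivAt C
      ((α • (1 : Matrix (Fin n) (Fin n) ℝ) + A).toEuclideanLin (C σ) + g σ) σ) :
    ∃ Γ : EuclideanSpace ℝ (Fin n),
      Tendsto (fun σ =>
          (NormedSpace.exp ((-σ) • (α • (1 : Matrix (Fin n) (Fin n) ℝ) + A))).toEuclideanLin
            (C σ)) atTop (nhds Γ) ∧
      ∀ σ ≥ (0:ℝ),
        ‖C σ - (NormedSpace.exp (σ • (α • (1 : Matrix (Fin n) (Fin n) ℝ) + A))).toEuclideanLin
            Γ‖ ≤ (K / (2 * α)) * Real.exp (-α * σ) :=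
  stmt19_general n α hα A hA K C g hgb hC
end
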